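/- arXiv:2005.11412 — 8 statements merged into one kernel-verified Lean document; each statement's English description precedes it below -/
import Mathlib

section
/- The number of sequences of length m over the alphabet {0,1,2,3} that avoid the contiguous subpattern 3,0,3 satisfies the recursion N(m) = 4N(m-1) - N(m-2) + 3N(m-3) for all m ≥ 3. -/
/-- A sequence `c : Fin m → Fin 4` avoids the consecutive pattern (3,0,3). -/
def TDAvoids {m : ℕ} (c : Fin m → Fin 4) : Prop :=
  ∀ i j k : Fin m, (j : ℕ) = (i : ℕ) + 1 → (k : ℕ) = (i : ℕ) + 2 →
    ¬(c i = 3 ∧ c j = 0 ∧ c k = 3)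

instance {m : ℕ} : DecidablePred (TDAvoids (m := m)) := fun _ => by
  unfold TDAvoids; infer_instance

/-- Number of length-`m` sequences over `{0,1,2,3}` avoiding the pattern (3,0,3). -/
def N (m : ℕ) : ℕ := Fintype.card {c : Fin m → Fin 4 // TDAvoids c}

/-!
Prepending a letter `a` to an avoiding word `w` keeps it avoiding unless `a = 3` and `w` begins
with `0, 3`. With `T = NStartsZeroThree` counting the avoiding words that begin with `0, 3`, this
gives `N (m + 1) + T m = 4 N m`. Moreover `0, 3, w` avoids the pattern iff `3, w` does, i.e. iff `w`
avoids it and does not begin with `0, 3`; hence `T (m + 2) + T m = N m`. Eliminating `T` from these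
two relations gives the recurrence.
-/

open Finset

theorem card_filter_fin_cons {α : Type*} [Fintype α] {m : ℕ} (p : (Fin (m + 1) → α) → Prop)
    [DecidablePred p] :
    #{c | p c} = ∑ a, #{w : Fin m → α | p (Fin.cons a w)} := by
  rw [← card_sigma]
  symm
  refine card_bij' (fun x _ => Fin.cons x.1 x.2) (fun c _ => ⟨c 0, Fin.tail c⟩) ?_ ?_ ?_ ?_ <;> simp

def HeadEq {α : Type*} {m : ℕ} (c : Fin m → α) (a : α) : Prop :=
  ∃ i : Fin m, (i : ℕ) = 0 ∧ c i = a

instance {α : Type*} [DecidableEq α] {m : ℕ} (a : α) : DecidablePred (HeadEq (m := m) · a) :=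
  fun _ => by unfold HeadEq; infer_instance

def StartsZeroThree {m : ℕ} (c : Fin m → Fin 4) : Prop :=
  ∃ i j : Fin m, (i : ℕ) = 0 ∧ (j : ℕ) = 1 ∧ c i = 0 ∧ c j = 3

instance {m : ℕ} : DecidablePred (StartsZeroThree (m := m)) :=
  fun _ => by unfold StartsZeroThree; infer_instance

theorem headEq_cons {α : Type*} {m : ℕ} (a b : α) (w : Fin m → α) :
    HeadEq (Fin.cons a w : Fin (m + 1) → α) b ↔ a = b := by
  simp [HeadEq]

theorem startsZeroThree_cons {m : ℕ} (a : Fin 4) (w : Fin m → Fin 4) :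
    StartsZeroThree (Fin.cons a w : Fin (m + 1) → Fin 4) ↔ a = 0 ∧ HeadEq w 3 := by
  simp only [StartsZeroThree, HeadEq, Fin.exists_fin_succ, Fin.cons_zero, Fin.cons_succ,
    Fin.val_zero, Fin.val_succ, Nat.add_eq_right, zero_ne_one, false_and, false_or,
    Fin.val_eq_zero_iff, exists_and_left, exists_eq_left]
  grind

theorem tdAvoids_cons {m : ℕ} (a : Fin 4) (w : Fin m → Fin 4) :
    TDAvoids (Fin.cons a w : Fin (m + 1) → Fin 4) ↔
      TDAvoids w ∧ ¬(a = 3 ∧ StartsZeroThree w) := by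
  simp only [TDAvoids, StartsZeroThree, Fin.forall_fin_succ, Fin.cons_zero, Fin.cons_succ,
    Fin.val_zero, Fin.val_succ, Nat.right_eq_add, Nat.add_eq_zero_iff, Nat.add_right_cancel_iff,
    OfNat.ofNat_ne_zero, one_ne_zero, and_false, IsEmpty.forall_iff, implies_true,
    true_and, zero_add, not_and, not_exists, exists_and_left, Fin.val_eq_zero_iff]
  grind

def NStartsZeroThree (m : ℕ) : ℕ := #{c : Fin m → Fin 4 | TDAvoids c ∧ StartsZeroThree c}

theorem N_eq_card_filter (m : ℕ) : N m = #{c : Fin m → Fin 4 | TDAvoids c} :=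
  Fintype.card_subtype _

theorem card_filter_not_startsZeroThree_add (m : ℕ) :
    #{c : Fin m → Fin 4 | TDAvoids c ∧ ¬StartsZeroThree c} + NStartsZeroThree m = N m := by
  rw [N_eq_card_filter, NStartsZeroThree, add_comm, ← filter_filter, ← filter_filter,
    card_filter_add_card_filter_not]

theorem N_succ_add_NStartsZeroThree (m : ℕ) : N (m + 1) + NStartsZeroThree m = 4 * N m := by
  rw [N_eq_card_filter, card_filter_fin_cons]
  simp only [tdAvoids_cons, Fin.sum_univ_four, Fin.reduceEq, false_and, not_false_eq_true,
    and_true, true_and]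
  rw [add_assoc, card_filter_not_startsZeroThree_add, N_eq_card_filter]
  ring

theorem NStartsZeroThree_add_two (m : ℕ) :
    NStartsZeroThree (m + 2) + NStartsZeroThree m = N m := by
  rw [NStartsZeroThree, card_filter_fin_cons]
  simp only [tdAvoids_cons, startsZeroThree_cons, Fin.sum_univ_four, Fin.reduceEq, false_and,
    not_false_eq_true, and_true, true_and, and_false, filter_false, card_empty, add_zero]
  rw [card_filter_fin_cons]
  simp only [tdAvoids_cons, headEq_cons, Fin.sum_univ_four, Fin.reduceEq, false_and,
    not_false_eq_true, and_true, true_and, and_false, filter_false, card_empty, zero_add]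
  exact card_filter_not_startsZeroThree_add m

theorem stmt_0 (m : ℕ) (hm : 3 ≤ m) :
    (N m : ℤ) = 4 * N (m - 1) - N (m - 2) + 3 * N (m - 3) := by
  obtain ⟨k, rfl⟩ := Nat.exists_eq_add_of_le' hm
  have h₃ : N (k + 3) + NStartsZeroThree (k + 2) = 4 * N (k + 2) :=
    N_succ_add_NStartsZeroThree (k + 2)
  have h₁ := N_succ_add_NStartsZeroThree k
  have hT := NStartsZeroThree_add_two k
  show (N (k + 3) : ℤ) = 4 * N (k + 2) - N (k + 1) + 3 * N k
  omega
end

section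
/- For every m ≥ 2, the number of length-m sequences over {0,1,2,3} avoiding the pattern 3,0,3 whose first two symbols are 3 followed by a nonzero symbol equals N(m-1) - N(m-2). -/
lemma cons_mk_succ {n : ℕ} {α : Type*} (x : α) (d : Fin n → α) (i : ℕ) (h : i+1 < n+1) :
    Fin.cons (α := fun _ => α) x d ⟨i+1, h⟩ = d ⟨i, Nat.lt_of_succ_lt_succ h⟩ := rfl

lemma tdavoids_tail {n : ℕ} {c : Fin (n+1) → Fin 4} (hc : TDAvoids c) :
    TDAvoids (Fin.tail c) := by
  intro i j k hj hk h
  exact hc i.succ j.succ k.succ (by simp [Fin.val_succ, hj])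
    (by simp [Fin.val_succ, hk]) h

lemma tdavoids_cons {n : ℕ} (a : Fin 4) {d : Fin n → Fin 4} (hd : TDAvoids d)
    (h0 : ∀ hn : 0 < n, ¬(a = 3 ∧ d ⟨0, hn⟩ = 0)) :
    TDAvoids (Fin.cons a d) := by
  rintro ⟨i, hi⟩ ⟨j, hj⟩ ⟨l, hl⟩ hj1 hl1 ⟨h1, h2, h3⟩
  simp only at hj1 hl1
  subst hj1; subst hl1
  cases i with
  | zero =>
    have hn : 0 < n := by omega
    exact h0 hn ⟨h1, h2⟩
  | succ i =>
    refine hd ⟨i, by omega⟩ ⟨i+1, by omega⟩ ⟨i+2, by omega⟩ rfl rfl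
      ⟨?_, ?_, ?_⟩
    · exact h1
    · exact h2
    · exact h3

theorem stmt_3 (m : ℕ) (hm : 2 ≤ m) :
    (Fintype.card {c : Fin m → Fin 4 //
        TDAvoids c ∧ c ⟨0, by omega⟩ = 3 ∧ c ⟨1, by omega⟩ ≠ 0} : ℤ)
      = N (m - 1) - N (m - 2) := by
  obtain ⟨k, rfl⟩ : ∃ k, m = k + 2 := ⟨m - 2, by omega⟩
  have e1 : Fintype.card {c : Fin (k+2) → Fin 4 //
        TDAvoids c ∧ c ⟨0, Nat.succ_pos _⟩ = 3 ∧ c ⟨1, Nat.succ_lt_succ k.succ_pos⟩ ≠ 0}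
      = Fintype.card {d : Fin (k+1) → Fin 4 // TDAvoids d ∧ ¬ d ⟨0, k.succ_pos⟩ = 0} := by
    refine Fintype.card_congr ⟨
      fun c => ⟨Fin.tail c.1, tdavoids_tail c.2.1, c.2.2.2⟩,
      fun d => ⟨Fin.cons 3 d.1, tdavoids_cons 3 d.2.1
        (fun hn h => d.2.2 h.2), rfl, d.2.2⟩, ?_, ?_⟩
    · rintro ⟨c, hc, h0, h1⟩
      apply Subtype.ext
      have h0' : c ⟨0, Nat.succ_pos _⟩ = 3 := h0
      have := Fin.cons_self_tail (α := fun _ => Fin 4) c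
      rw [show c 0 = c ⟨0, Nat.succ_pos _⟩ from rfl, h0'] at this
      exact this
    · rintro ⟨d, hd, h0⟩
      apply Subtype.ext
      exact Fin.tail_cons (α := fun _ => Fin 4) 3 d
  have e2 : Fintype.card {d : Fin (k+1) → Fin 4 // TDAvoids d ∧ d ⟨0, k.succ_pos⟩ = 0}
      = N k := by
    refine Fintype.card_congr ⟨
      fun d => ⟨Fin.tail d.1, tdavoids_tail d.2.1⟩,
      fun e => ⟨Fin.cons 0 e.1, tdavoids_cons 0 e.2
        (fun hn h => absurd h.1 (by decide)), rfl⟩, ?_, ?_⟩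
    · rintro ⟨d, hd, h0⟩
      apply Subtype.ext
      have h0' : d ⟨0, k.succ_pos⟩ = 0 := h0
      have := Fin.cons_self_tail (α := fun _ => Fin 4) d
      rw [show d 0 = d ⟨0, k.succ_pos⟩ from rfl, h0'] at this
      exact this
    · rintro ⟨e, he⟩
      apply Subtype.ext
      exact Fin.tail_cons (α := fun _ => Fin 4) 0 e
  have e3 : Fintype.card {d : Fin (k+1) → Fin 4 // TDAvoids d ∧ ¬ d ⟨0, k.succ_pos⟩ = 0}
      + Fintype.card {d : Fin (k+1) → Fin 4 // TDAvoids d ∧ d ⟨0, k.succ_pos⟩ = 0} = N (k+1) := by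
    have hA : Fintype.card {d : Fin (k+1) → Fin 4 // TDAvoids d ∧ ¬ d ⟨0, k.succ_pos⟩ = 0}
        = Fintype.card {x : {d : Fin (k+1) → Fin 4 // TDAvoids d} // ¬ x.1 ⟨0, k.succ_pos⟩ = 0} :=
      (Fintype.card_congr (Equiv.subtypeSubtypeEquivSubtypeInter TDAvoids (fun d : Fin (k+1) → Fin 4 => ¬ d ⟨0, k.succ_pos⟩ = 0))).symm
    have hB : Fintype.card {d : Fin (k+1) → Fin 4 // TDAvoids d ∧ d ⟨0, k.succ_pos⟩ = 0}
        = Fintype.card {x : {d : Fin (k+1) → Fin 4 // TDAvoids d} // x.1 ⟨0, k.succ_pos⟩ = 0} :=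
      (Fintype.card_congr (Equiv.subtypeSubtypeEquivSubtypeInter TDAvoids (fun d : Fin (k+1) → Fin 4 => d ⟨0, k.succ_pos⟩ = 0))).symm
    have hsum := Fintype.card_congr
      (Equiv.sumCompl (fun x : {d : Fin (k+1) → Fin 4 // TDAvoids d} => x.1 ⟨0, k.succ_pos⟩ = 0))
    rw [Fintype.card_sum] at hsum
    rw [hA, hB,
      show N (k+1) = Fintype.card {d : Fin (k+1) → Fin 4 // TDAvoids d} from rfl,
      Nat.add_comm]
    exact hsum
  have hm1 : (k + 2) - 1 = k + 1 := rfl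
  have hm2 : (k + 2) - 2 = k := rfl
  rw [hm1, hm2, e1]
  rw [← e3, e2]
  push_cast
  ring
end

section
/- The largest real eigenvalue λ' of the 3×3 matrix [[3,0,1],[3,0,0],[2,1,1]] satisfies the characteristic equation λ'³ = 4λ'² - λ' + 3, and 3.93 < λ' < 3.94. -/
open Polynomial

/-- State-transition matrix of the FSTD for GF(4) sequences avoiding α² 0 α². -/
noncomputable def T' : Matrix (Fin 3) (Fin 3) ℝ := !![3, 0, 1; 3, 0, 0; 2, 1, 1]

lemma hcp : Matrix.charpoly T' = X^3 - 4*X^2 + X - 3 := by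
  rw [Matrix.charpoly, Matrix.det_fin_three]
  simp [Matrix.charmatrix_apply, T', Matrix.one_apply, map_ofNat]
  ring

lemma root_iff (x : ℝ) : (Matrix.charpoly T').IsRoot x ↔ x^3 - 4*x^2 + x - 3 = 0 := by
  rw [hcp]; simp [IsRoot]

theorem stmt_5 :
    ∃ l : ℝ, (Matrix.charpoly T').IsRoot l ∧
      (∀ x : ℝ, (Matrix.charpoly T').IsRoot x → x ≤ l) ∧
      l ^ 3 = 4 * l ^ 2 - l + 3 ∧ 3.93 < l ∧ l < 3.94 := by
  have h := intermediate_value_Icc (a := (3.93:ℝ)) (b := 3.94) (by norm_num)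
    (f := fun x => x^3 - 4*x^2 + x - 3) (by fun_prop)
  have h0 : (0:ℝ) ∈ Set.Icc ((3.93:ℝ)^3 - 4*3.93^2 + 3.93 - 3) (3.94^3 - 4*3.94^2 + 3.94 - 3) := by
    constructor <;> norm_num
  obtain ⟨l, hl, hfl⟩ := h h0
  have hl1 : (3.93:ℝ) ≤ l := hl.1
  have hl2 : l ≤ 3.94 := hl.2
  simp only at hfl
  have hne1 : l ≠ 3.93 := by rintro rfl; norm_num at hfl
  have hne2 : l ≠ 3.94 := by rintro rfl; norm_num at hfl
  refine ⟨l, (root_iff l).2 hfl, ?_, by nlinarith, lt_of_le_of_ne hl1 (Ne.symm hne1), lt_of_le_of_ne hl2 hne2⟩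
  intro x hx
  rw [root_iff] at hx
  nlinarith [sq_nonneg (x - l), sq_nonneg (x + l), sq_nonneg x, sq_nonneg (x - 4), sq_nonneg (x + l - 4)]
end

section
/- If x(m) is any sequence of positive reals satisfying x(m) = 4x(m-1) - x(m-2) + 3x(m-3) for all m ≥ 3 with x(0), x(1), x(2) > 0, and λ is the unique real root of λ³ = 4λ² - λ + 3 with λ > 1, then log₂ x(m) / m converges to log₂ λ as m → ∞. -/
open Filter in
theorem stmt_7 (x : ℕ → ℝ) (hpos : ∀ m, 0 < x m)
    (hrec : ∀ m, 3 ≤ m → x m = 4 * x (m - 1) - x (m - 2) + 3 * x (m - 3))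
    (l : ℝ) (hl : l ^ 3 = 4 * l ^ 2 - l + 3) (hl1 : 1 < l)
    (huniq : ∀ y : ℝ, y ^ 3 = 4 * y ^ 2 - y + 3 → 1 < y → y = l) :
    Tendsto (fun m : ℕ => Real.logb 2 (x m) / (m : ℝ)) atTop (nhds (Real.logb 2 l)) := by
  have hl0 : (0:ℝ) < l := by linarith
  have hlp : ∀ m : ℕ, (0:ℝ) < l ^ m := fun m => pow_pos hl0 m
  -- derived 4-term recurrence with positive coefficients
  have hrec4 : ∀ k : ℕ, x (k+4) = 3 * x (k+3) + 3 * x (k+2) + 2 * x (k+1) + 3 * x k := by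
    intro k
    have h1 := hrec (k+4) (by omega)
    have h2 := hrec (k+3) (by omega)
    simp only [show k+4-1 = k+3 by omega, show k+4-2 = k+2 by omega,
      show k+4-3 = k+1 by omega] at h1
    simp only [show k+3-1 = k+2 by omega, show k+3-2 = k+1 by omega,
      show k+3-3 = k by omega] at h2
    linarith
  have h4 : l^4 = 3*l^3 + 3*l^2 + 2*l + 3 := by linear_combination (l + 1) * hl
  have hl4 : ∀ k : ℕ, l^(k+4) = 3*l^(k+3) + 3*l^(k+2) + 2*l^(k+1) + 3*l^k := by
    intro k
    linear_combination l^k * h4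
  set c := min (min (x 0 / l^0) (x 1 / l^1)) (min (x 2 / l^2) (x 3 / l^3)) with hc
  set C := max (max (x 0 / l^0) (x 1 / l^1)) (max (x 2 / l^2) (x 3 / l^3)) with hC
  have hc0 : 0 < c := by
    have h0 := div_pos (hpos 0) (hlp 0)
    have h1 := div_pos (hpos 1) (hlp 1)
    have h2 := div_pos (hpos 2) (hlp 2)
    have h3 := div_pos (hpos 3) (hlp 3)
    rw [hc]
    exact lt_min (lt_min h0 h1) (lt_min h2 h3)
  have hcC : c ≤ C := le_trans (min_le_left _ _) (le_trans (min_le_left _ _)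
    (le_trans (le_max_left _ _) (le_max_left _ _)))
  have hC0 : 0 < C := lt_of_lt_of_le hc0 hcC
  have base : ∀ i, i ≤ 3 → c * l^i ≤ x i ∧ x i ≤ C * l^i := by
    intro i hi
    have hli := hlp i
    constructor
    · rw [← le_div_iff₀ hli]
      interval_cases i
      · exact le_trans (min_le_left _ _) (min_le_left _ _)
      · exact le_trans (min_le_left _ _) (min_le_right _ _)
      · exact le_trans (min_le_right _ _) (min_le_left _ _)
      · exact le_trans (min_le_right _ _) (min_le_right _ _)
    · rw [← div_le_iff₀ hli]
      interval_cases i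
      · exact le_trans (le_max_left _ _) (le_max_left _ _)
      · exact le_trans (le_max_right _ _) (le_max_left _ _)
      · exact le_trans (le_max_left _ _) (le_max_right _ _)
      · exact le_trans (le_max_right _ _) (le_max_right _ _)
  have key : ∀ m, c * l^m ≤ x m ∧ x m ≤ C * l^m := by
    have H : ∀ k, ∀ j, j ≤ 3 → c * l^(k+j) ≤ x (k+j) ∧ x (k+j) ≤ C * l^(k+j) := by
      intro k
      induction k with
      | zero => intro j hj; simpa using base j hj
      | succ k ih =>
        intro j hj
        interval_cases j
        · have := ih 1 (by norm_num)
          simpa [show k + 1 + 0 = k + 1 by omega] using this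
        · have := ih 2 (by norm_num)
          simpa [show k + 1 + 1 = k + 2 by omega] using this
        · have := ih 3 (by norm_num)
          simpa [show k + 1 + 2 = k + 3 by omega] using this
        · have e : k + 1 + 3 = k + 4 := by omega
          rw [e]
          have i0 := ih 0 (by norm_num)
          have i1 := ih 1 (by norm_num)
          have i2 := ih 2 (by norm_num)
          have i3 := ih 3 (by norm_num)
          simp only [Nat.add_zero] at i0
          have hr := hrec4 k
          have hlr := hl4 k
          constructor
          · rw [hr, hlr]; nlinarith [i0.1, i1.1, i2.1, i3.1]
          · rw [hr, hlr]; nlinarith [i0.2, i1.2, i2.2, i3.2]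
    intro m
    have := H m 0 (by norm_num)
    simpa using this
  -- log bounds
  have hb2 : (1:ℝ) < 2 := one_lt_two
  have hlog : ∀ m : ℕ, 1 ≤ m →
      Real.logb 2 l + Real.logb 2 c / m ≤ Real.logb 2 (x m) / m ∧
      Real.logb 2 (x m) / m ≤ Real.logb 2 l + Real.logb 2 C / m := by
    intro m hm
    have hm0 : (0:ℝ) < m := by exact_mod_cast hm
    have hx := hpos m
    have h1 : Real.logb 2 (c * l^m) ≤ Real.logb 2 (x m) :=
      Real.logb_le_logb_of_le hb2 (by positivity) (key m).1
    have h2 : Real.logb 2 (x m) ≤ Real.logb 2 (C * l^m) :=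
      Real.logb_le_logb_of_le hb2 hx (key m).2
    rw [Real.logb_mul (ne_of_gt hc0) (ne_of_gt (hlp m)), Real.logb_pow] at h1
    rw [Real.logb_mul (ne_of_gt hC0) (ne_of_gt (hlp m)), Real.logb_pow] at h2
    constructor
    · rw [le_div_iff₀ hm0]
      have e : (Real.logb 2 l + Real.logb 2 c / m) * m
          = Real.logb 2 c + m * Real.logb 2 l := by field_simp; ring
      rw [e]; exact h1
    · rw [div_le_iff₀ hm0]
      have e : (Real.logb 2 l + Real.logb 2 C / m) * m
          = Real.logb 2 C + m * Real.logb 2 l := by field_simp; ring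
      rw [e]; exact h2
  have hlow : Tendsto (fun m : ℕ => Real.logb 2 l + Real.logb 2 c / m) atTop
      (nhds (Real.logb 2 l)) := by
    have := (tendsto_const_nhds : Filter.Tendsto (fun _ : ℕ => Real.logb 2 l) atTop
      (nhds (Real.logb 2 l))).add (tendsto_const_div_atTop_nhds_zero_nat (Real.logb 2 c))
    simpa using this
  have hhigh : Tendsto (fun m : ℕ => Real.logb 2 l + Real.logb 2 C / m) atTop
      (nhds (Real.logb 2 l)) := by
    have := (tendsto_const_nhds : Filter.Tendsto (fun _ : ℕ => Real.logb 2 l) atTop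
      (nhds (Real.logb 2 l))).add (tendsto_const_div_atTop_nhds_zero_nat (Real.logb 2 C))
    simpa using this
  refine tendsto_of_tendsto_of_tendsto_of_le_of_le' hlow hhigh ?_ ?_
  · filter_upwards [eventually_ge_atTop 1] with m hm
    exact (hlog m hm).1
  · filter_upwards [eventually_ge_atTop 1] with m hm
    exact (hlog m hm).2
end

section
/- The map sending a sequence c : Fin m → Fin 4 avoiding (3,0,3) to its lexicographic rank among all such sequences (ordered with c(0) most significant, and symbols ordered 0 < 1 < 2 < 3) is a bijection onto {0, 1, ..., N(m)-1}, and this rank equals g(c) = Σ_{i=0}^{m-1} [ a_i·N(i) + 𝟙(a_{i+1}=3 ∧ a_i ≠ 0)·Σ_{j≥0, i-2j>0} (-1)^{j+1}·N(i-2j-1) ], where a_i = c(m-1-i) (so a_{m-1} is the leftmost symbol, with a_m := 0) and N(-1) := 1/3, N(0) := 1, N(1) := 4, N(k) = 4N(k-1) - N(k-2) + 3N(k-3) for k ≥ 2. -/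
/-- Strict lexicographic order on sequences, leftmost symbol most significant. -/
def LexLt {m : ℕ} (c d : Fin m → Fin 4) : Prop :=
  ∃ i : Fin m, (∀ j : Fin m, j < i → c j = d j) ∧ c i < d i

instance {m : ℕ} (c d : Fin m → Fin 4) : Decidable (LexLt c d) := by
  unfold LexLt; infer_instance

/-- Lexicographic rank of `c` among sequences avoiding (3,0,3). -/
def rank {m : ℕ} (c : Fin m → Fin 4) : ℕ :=
  Fintype.card {d : Fin m → Fin 4 // TDAvoids d ∧ LexLt d c}

/-- `M n = N(n-1)` as rational numbers, with `M 0 = N(-1) = 1/3`. -/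
def M : ℕ → ℚ
  | 0 => 1 / 3
  | 1 => 1
  | 2 => 4
  | (k + 3) => 4 * M (k + 2) - M (k + 1) + 3 * M k

/-- The encoding-decoding index `g(c)` of Theorem 2. -/
def gIdx (m : ℕ) (c : Fin m → Fin 4) : ℚ :=
  let a : ℕ → ℕ := fun i => if h : i < m then ((c ⟨m - 1 - i, by omega⟩ : Fin 4) : ℕ) else 0
  ∑ i ∈ Finset.range m,
    ((a i : ℚ) * M (i + 1) +
      (if a (i + 1) = 3 ∧ a i ≠ 0 then
        ∑ j ∈ Finset.range ((i + 1) / 2), (-1 : ℚ) ^ (j + 1) * M (i - 2 * j)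
      else 0))


def bad (x y z : Fin 4) : Prop := x = 3 ∧ y = 0 ∧ z = 3

instance (x y z : Fin 4) : Decidable (bad x y z) := by unfold bad; infer_instance

def A2 (x y : Fin 4) {ℓ : ℕ} (c : Fin ℓ → Fin 4) : Prop :=
  (∀ i : ℕ, (h : i + 2 < ℓ) →
      ¬(c ⟨i, by omega⟩ = 3 ∧ c ⟨i+1, by omega⟩ = 0 ∧ c ⟨i+2, h⟩ = 3))
  ∧ (∀ h : 0 < ℓ, ¬(x = 3 ∧ y = 0 ∧ c ⟨0, h⟩ = 3))
  ∧ (∀ h : 1 < ℓ, ¬(y = 3 ∧ c ⟨0, by omega⟩ = 0 ∧ c ⟨1, h⟩ = 3))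


instance A2.dec (x y : Fin 4) (ℓ : ℕ) (c : Fin ℓ → Fin 4) : Decidable (A2 x y c) := by
  refine decidable_of_iff ((∀ i, ∀ _h : i < ℓ - 2,
      ¬(c ⟨i, by omega⟩ = 3 ∧ c ⟨i+1, by omega⟩ = 0 ∧ c ⟨i+2, by omega⟩ = 3)) ∧
    (if h : 0 < ℓ then ¬(x = 3 ∧ y = 0 ∧ c ⟨0, h⟩ = 3) else True) ∧
    (if h : 1 < ℓ then ¬(y = 3 ∧ c ⟨0, by omega⟩ = 0 ∧ c ⟨1, h⟩ = 3) else True)) ?_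
  constructor
  · rintro ⟨h1, h2, h3⟩
    refine ⟨fun i h => h1 i (by omega), fun h => ?_, fun h => ?_⟩
    · rw [dif_pos h] at h2; exact h2
    · rw [dif_pos h] at h3; exact h3
  · rintro ⟨h1, h2, h3⟩
    refine ⟨fun i h => h1 i (by omega), ?_, ?_⟩
    · by_cases h : 0 < ℓ
      · rw [dif_pos h]; exact h2 h
      · rw [dif_neg h]; trivial
    · by_cases h : 1 < ℓ
      · rw [dif_pos h]; exact h3 h
      · rw [dif_neg h]; trivial

lemma A2_succ (x y : Fin 4) {n : ℕ} (c : Fin (n+1) → Fin 4) :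
    A2 x y c ↔ ¬ bad x y (c 0) ∧ A2 y (c 0) (Fin.tail c) := by
  have h0 : (0 : Fin (n+1)) = ⟨0, Nat.succ_pos n⟩ := rfl
  have htail : ∀ (i : ℕ) (h : i < n), Fin.tail c ⟨i, h⟩ = c ⟨i+1, by omega⟩ := by
    intro i h; rfl
  constructor
  · rintro ⟨h1, h2, h3⟩
    refine ⟨?_, ?_, ?_, ?_⟩
    · rw [h0]; exact fun hb => h2 (Nat.succ_pos n) hb
    · intro i h
      rw [htail i (by omega), htail (i+1) (by omega), htail (i+2) (by omega)]
      exact h1 (i+1) (by omega)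
    · intro h
      rw [htail 0 h, h0]
      exact fun hb => h3 (by omega) hb
    · intro h
      rw [htail 0 (by omega), htail 1 h, h0]
      exact h1 0 (by omega)
  · rintro ⟨hb, h1, h2, h3⟩
    refine ⟨?_, ?_, ?_⟩
    · intro i h
      match i, h with
      | 0, h =>
        have := h3 (by omega)
        rw [htail 0 (by omega), htail 1 (by omega)] at this
        exact fun hc => this ⟨hc.1, hc.2.1, hc.2.2⟩
      | (i+1), h =>
        have := h1 i (by omega)
        rw [htail i (by omega), htail (i+1) (by omega), htail (i+2) (by omega)] at this
        exact this
    · intro h hc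
      rw [← h0] at hc
      exact hb ⟨hc.1, hc.2.1, hc.2.2⟩
    · intro h
      have := h2 (by omega)
      rw [htail 0 (by omega), h0] at this
      exact this

def cnt : ℕ → Fin 4 → Fin 4 → ℕ
  | 0, _, _ => 1
  | (n+1), x, y => ∑ z : Fin 4, if bad x y z then 0 else cnt n y z

lemma card_A2 : ∀ (ℓ : ℕ) (x y : Fin 4),
    Fintype.card {c : Fin ℓ → Fin 4 // A2 x y c} = cnt ℓ x y := by
  intro ℓ
  induction ℓ with
  | zero =>
    intro x y
    rw [cnt]
    rw [Fintype.card_eq_one_iff]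
    refine ⟨⟨Fin.elim0, ?_, ?_, ?_⟩, ?_⟩
    · intro i h; omega
    · intro h; omega
    · intro h; omega
    · rintro ⟨c, hc⟩
      ext i; exact i.elim0
  | succ n ih =>
    intro x y
    have e : {c : Fin (n+1) → Fin 4 // A2 x y c} ≃
        Σ z : Fin 4, {t : Fin n → Fin 4 // ¬ bad x y z ∧ A2 y z t} :=
      { toFun := fun c => ⟨c.1 0, Fin.tail c.1, (A2_succ x y c.1).1 c.2⟩
        invFun := fun p => ⟨Fin.cons p.1 p.2.1, (A2_succ x y _).2 (by
          rw [Fin.cons_zero, Fin.tail_cons]; exact p.2.2)⟩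
        left_inv := fun c => Subtype.ext (Fin.cons_self_tail c.1)
        right_inv := fun p => by
          rcases p with ⟨z, t, h⟩
          rfl }
    rw [Fintype.card_congr e, Fintype.card_sigma, cnt]
    refine Finset.sum_congr rfl fun z _ => ?_
    by_cases hb : bad x y z
    · rw [if_pos hb, Fintype.card_eq_zero_iff]
      exact ⟨fun t => t.2.1 hb⟩
    · rw [if_neg hb, Fintype.card_congr (Equiv.subtypeEquivRight fun t => and_iff_right hb),
        ih y z]

lemma tdavoids_iff {m : ℕ} (c : Fin m → Fin 4) : TDAvoids c ↔ A2 1 1 c := by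
  constructor
  · intro h
    refine ⟨?_, ?_, ?_⟩
    · intro i hi
      exact h ⟨i, by omega⟩ ⟨i+1, by omega⟩ ⟨i+2, hi⟩ rfl rfl
    · intro _ hc; exact absurd hc.1 (by decide)
    · intro _ hc; exact absurd hc.1 (by decide)
  · intro ⟨h1, _, _⟩ i j k hj hk hc
    have hi : (i : ℕ) + 2 < m := by omega
    have : j = ⟨(i:ℕ)+1, by omega⟩ := Fin.ext hj
    have hk' : k = ⟨(i:ℕ)+2, hi⟩ := Fin.ext hk
    have hi' : i = ⟨(i:ℕ), by omega⟩ := Fin.ext rfl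
    exact h1 i hi ⟨by rw [← hi']; exact hc.1, by rw [← this]; exact hc.2.1,
      by rw [← hk']; exact hc.2.2⟩
lemma cnt_congr : ∀ (ℓ : ℕ) (x y x' y' : Fin 4),
    ((x = 3 ∧ y = 0) ↔ (x' = 3 ∧ y' = 0)) → ((y = 3) ↔ (y' = 3)) →
    cnt ℓ x y = cnt ℓ x' y' := by
  intro ℓ
  induction ℓ with
  | zero => intros; rfl
  | succ n ih =>
    intro x y x' y' h1 h2
    rw [cnt, cnt]
    refine Finset.sum_congr rfl fun z _ => ?_
    have hbad : bad x y z ↔ bad x' y' z := by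
      unfold bad
      constructor
      · rintro ⟨a, b, c⟩; exact ⟨(h1.1 ⟨a, b⟩).1, (h1.1 ⟨a, b⟩).2, c⟩
      · rintro ⟨a, b, c⟩; exact ⟨(h1.2 ⟨a, b⟩).1, (h1.2 ⟨a, b⟩).2, c⟩
    have hiff : (y = 3 ∧ z = 0) ↔ (y' = 3 ∧ z = 0) := by
      constructor
      · rintro ⟨a, b⟩; exact ⟨h2.1 a, b⟩
      · rintro ⟨a, b⟩; exact ⟨h2.2 a, b⟩
    rw [if_congr hbad rfl (ih y z y' z hiff Iff.rfl)]

def Tn (n : ℕ) : ℕ := cnt n 1 1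
def Bn (n : ℕ) : ℕ := cnt n 1 3
def Cn (n : ℕ) : ℕ := cnt n 3 0

lemma Tn_succ (n : ℕ) : Tn (n+1) = 3 * Tn n + Bn n := by
  have h0 : cnt n 1 0 = Tn n := cnt_congr n 1 0 1 1 (by simp) (by simp)
  have h2 : cnt n 1 2 = Tn n := cnt_congr n 1 2 1 1 (by simp) (by simp)
  rw [Tn, cnt, Fin.sum_univ_four]
  rw [if_neg (show ¬ bad 1 1 0 by decide), if_neg (show ¬ bad 1 1 1 by decide),
    if_neg (show ¬ bad 1 1 2 by decide), if_neg (show ¬ bad 1 1 3 by decide)]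
  rw [h0, h2]
  show Tn n + Tn n + Tn n + Bn n = 3 * Tn n + Bn n
  ring

lemma Bn_succ (n : ℕ) : Bn (n+1) = 2 * Tn n + Bn n + Cn n := by
  have h1 : cnt n 3 1 = Tn n := cnt_congr n 3 1 1 1 (by simp) (by simp)
  have h2 : cnt n 3 2 = Tn n := cnt_congr n 3 2 1 1 (by simp) (by simp)
  have h3 : cnt n 3 3 = Bn n := cnt_congr n 3 3 1 3 (by simp) (by simp)
  rw [Bn, cnt, Fin.sum_univ_four]
  rw [if_neg (show ¬ bad 1 3 0 by decide), if_neg (show ¬ bad 1 3 1 by decide),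
    if_neg (show ¬ bad 1 3 2 by decide), if_neg (show ¬ bad 1 3 3 by decide)]
  rw [h1, h2, h3]
  show Cn n + Tn n + Tn n + Bn n = 2 * Tn n + Bn n + Cn n
  ring

lemma Cn_succ (n : ℕ) : Cn (n+1) = 3 * Tn n := by
  have h0 : cnt n 0 0 = Tn n := cnt_congr n 0 0 1 1 (by simp) (by simp)
  have h1 : cnt n 0 1 = Tn n := cnt_congr n 0 1 1 1 (by simp) (by simp)
  have h2 : cnt n 0 2 = Tn n := cnt_congr n 0 2 1 1 (by simp) (by simp)
  rw [Cn, cnt, Fin.sum_univ_four]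
  rw [if_neg (show ¬ bad 3 0 0 by decide), if_neg (show ¬ bad 3 0 1 by decide),
    if_neg (show ¬ bad 3 0 2 by decide), if_pos (show bad 3 0 3 by decide)]
  rw [h0, h1, h2]
  ring

lemma Tn_rec (n : ℕ) : (Tn (n+3) : ℚ) = 4 * Tn (n+2) - Tn (n+1) + 3 * Tn n := by
  have q1 : (Tn (n+3) : ℚ) = 3 * Tn (n+2) + Bn (n+2) := by exact_mod_cast congrArg (Nat.cast : ℕ → ℚ) (Tn_succ (n+2))
  have q2 : (Bn (n+2) : ℚ) = 2 * Tn (n+1) + Bn (n+1) + Cn (n+1) := by exact_mod_cast congrArg (Nat.cast : ℕ → ℚ) (Bn_succ (n+1))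
  have q3 : (Cn (n+1) : ℚ) = 3 * Tn n := by exact_mod_cast congrArg (Nat.cast : ℕ → ℚ) (Cn_succ n)
  have q4 : (Tn (n+2) : ℚ) = 3 * Tn (n+1) + Bn (n+1) := by exact_mod_cast congrArg (Nat.cast : ℕ → ℚ) (Tn_succ (n+1))
  linarith

lemma M_eq : ∀ n : ℕ, M (n+1) = (Tn n : ℚ) ∧ M (n+2) = (Tn (n+1) : ℚ) ∧ M (n+3) = (Tn (n+2) : ℚ) := by
  intro n
  induction n with
  | zero =>
    refine ⟨?_, ?_, ?_⟩
    · show M 1 = ((Tn 0 : ℕ) : ℚ)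
      rw [show Tn 0 = 1 from rfl, show M 1 = 1 from rfl]; norm_num
    · show M 2 = ((Tn 1 : ℕ) : ℚ)
      rw [show Tn 1 = 4 by decide, show M 2 = 4 from rfl]; norm_num
    · show M 3 = ((Tn 2 : ℕ) : ℚ)
      rw [show Tn 2 = 16 by decide, show M 3 = 4 * M 2 - M 1 + 3 * M 0 from rfl,
        show M 2 = 4 from rfl, show M 1 = 1 from rfl, show M 0 = 1/3 from rfl]
      norm_num
  | succ k ih =>
    refine ⟨ih.2.1, ih.2.2, ?_⟩
    show M (k+4) = (Tn (k+3) : ℚ)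
    rw [show M (k+4) = 4 * M (k+3) - M (k+2) + 3 * M (k+1) from rfl,
      ih.2.2, ih.2.1, ih.1, Tn_rec]

lemma M_eq' (n : ℕ) : M (n+1) = (Tn n : ℚ) := (M_eq n).1

def SQ (n : ℕ) : ℚ := ∑ j ∈ Finset.range ((n+1)/2), (-1 : ℚ)^j * M (n - 2*j)

lemma SQ_succ2 (n : ℕ) : SQ (n+2) = M (n+2) - SQ n := by
  have hr : (n+2+1)/2 = (n+1)/2 + 1 := by omega
  rw [SQ, hr, Finset.sum_range_succ']
  have key : ∀ j, (-1:ℚ)^(j+1) * M (n+2 - 2*(j+1)) = -((-1:ℚ)^j * M (n - 2*j)) := by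
    intro j
    rw [show n+2-2*(j+1) = n - 2*j by omega, pow_succ]
    ring
  rw [Finset.sum_congr rfl fun j _ => key j]
  rw [Finset.sum_neg_distrib]
  show -SQ n + (-1:ℚ)^0 * M (n+2-2*0) = M (n+2) - SQ n
  norm_num
  ring

lemma TCn : ∀ n : ℕ, ((Tn n : ℚ) = Cn n + SQ n) ∧ ((Tn (n+1) : ℚ) = Cn (n+1) + SQ (n+1)) := by
  intro n
  induction n with
  | zero =>
    constructor
    · norm_num [SQ, Tn, Cn, cnt]
    · show (Tn 1 : ℚ) = (Cn 1 : ℚ) + SQ 1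
      rw [show Tn 1 = 4 by decide, show Cn 1 = 3 by decide, SQ]
      norm_num [show M 1 = 1 from rfl]
  | succ k ih =>
    refine ⟨ih.2, ?_⟩
    have h1 : (Tn (k+2) : ℚ) = 3 * Tn (k+1) + Bn (k+1) := by
      exact_mod_cast congrArg (Nat.cast : ℕ → ℚ) (Tn_succ (k+1))
    have h2 : (Cn (k+2) : ℚ) = 3 * Tn (k+1) := by
      exact_mod_cast congrArg (Nat.cast : ℕ → ℚ) (Cn_succ (k+1))
    have h3 : (Bn (k+1) : ℚ) = 2 * Tn k + Bn k + Cn k := by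
      exact_mod_cast congrArg (Nat.cast : ℕ → ℚ) (Bn_succ k)
    have h4 : (Tn (k+1) : ℚ) = 3 * Tn k + Bn k := by
      exact_mod_cast congrArg (Nat.cast : ℕ → ℚ) (Tn_succ k)
    have h5 := SQ_succ2 k
    have h6 := M_eq' (k+1)
    have h7 := ih.1
    rw [h1, h2, h5, h6]
    linarith
lemma lexLt_succ {n : ℕ} (d c : Fin (n+1) → Fin 4) :
    LexLt d c ↔ d 0 < c 0 ∨ (d 0 = c 0 ∧ LexLt (Fin.tail d) (Fin.tail c)) := by
  constructor
  · rintro ⟨i, hpre, hlt⟩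
    induction i using Fin.cases with
    | zero => exact Or.inl hlt
    | succ k =>
      refine Or.inr ⟨hpre 0 (Fin.succ_pos k), ⟨k, ?_, hlt⟩⟩
      intro j hj
      exact hpre j.succ (Fin.succ_lt_succ_iff.2 hj)
  · rintro (h | ⟨h0, j, hpre, hlt⟩)
    · exact ⟨0, fun j hj => absurd hj (Fin.not_lt_zero j), h⟩
    · refine ⟨j.succ, ?_, hlt⟩
      intro i hi
      induction i using Fin.cases with
      | zero => exact h0
      | succ k => exact hpre k (Fin.succ_lt_succ_iff.1 hi)

def rkAux : (ℓ : ℕ) → Fin 4 → Fin 4 → (Fin ℓ → Fin 4) → ℕ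
  | 0, _, _, _ => 0
  | (n+1), x, y, c =>
      (∑ z : Fin 4, if z < c 0 ∧ ¬ bad x y z then cnt n y z else 0)
        + rkAux n y (c 0) (Fin.tail c)

lemma rank_eq_rkAux : ∀ (ℓ : ℕ) (x y : Fin 4) (c : Fin ℓ → Fin 4), A2 x y c →
    Fintype.card {d : Fin ℓ → Fin 4 // A2 x y d ∧ LexLt d c} = rkAux ℓ x y c := by
  intro ℓ
  induction ℓ with
  | zero =>
    intro x y c _
    rw [rkAux, Fintype.card_eq_zero_iff]
    exact ⟨fun d => (d.2.2.choose).elim0⟩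
  | succ n ih =>
    intro x y c hc
    have hc' := (A2_succ x y c).1 hc
    have e : {d : Fin (n+1) → Fin 4 // A2 x y d ∧ LexLt d c} ≃
        Σ z : Fin 4, {t : Fin n → Fin 4 //
          (¬ bad x y z ∧ A2 y z t) ∧ (z < c 0 ∨ (z = c 0 ∧ LexLt t (Fin.tail c)))} :=
      { toFun := fun d => ⟨d.1 0, Fin.tail d.1,
          ⟨(A2_succ x y d.1).1 d.2.1, (lexLt_succ d.1 c).1 d.2.2⟩⟩
        invFun := fun p => ⟨Fin.cons p.1 p.2.1,
          (A2_succ x y _).2 (by rw [Fin.cons_zero, Fin.tail_cons]; exact p.2.2.1),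
          (lexLt_succ _ c).2 (by rw [Fin.cons_zero, Fin.tail_cons]; exact p.2.2.2)⟩
        left_inv := fun d => Subtype.ext (Fin.cons_self_tail d.1)
        right_inv := fun p => by rcases p with ⟨z, t, h⟩; rfl }
    rw [Fintype.card_congr e, Fintype.card_sigma, rkAux]
    have key : ∀ z : Fin 4,
        Fintype.card {t : Fin n → Fin 4 //
            (¬ bad x y z ∧ A2 y z t) ∧ (z < c 0 ∨ (z = c 0 ∧ LexLt t (Fin.tail c)))}
          = (if z < c 0 ∧ ¬ bad x y z then cnt n y z else 0)
            + (if z = c 0 then rkAux n y (c 0) (Fin.tail c) else 0) := ?_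
    · rw [Finset.sum_congr rfl fun z _ => key z, Finset.sum_add_distrib]
      congr 1
      rw [Finset.sum_ite_eq' Finset.univ (c 0)
        (fun _ => rkAux n y (c 0) (Fin.tail c)), if_pos (Finset.mem_univ _)]
    intro z
    rcases lt_trichotomy z (c 0) with hlt | heq | hgt
    · have hzne : z ≠ c 0 := ne_of_lt hlt
      have hiff : ∀ t : Fin n → Fin 4,
          ((¬ bad x y z ∧ A2 y z t) ∧ (z < c 0 ∨ (z = c 0 ∧ LexLt t (Fin.tail c))))
            ↔ (¬ bad x y z ∧ A2 y z t) := by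
        intro t
        exact ⟨fun h => h.1, fun h => ⟨h, Or.inl hlt⟩⟩
      rw [Fintype.card_congr (Equiv.subtypeEquivRight hiff), if_neg hzne, add_zero]
      by_cases hb : bad x y z
      · rw [if_neg (fun h => h.2 hb)]
        exact Fintype.card_eq_zero_iff.2 ⟨fun t => absurd hb t.2.1⟩
      · rw [if_pos ⟨hlt, hb⟩,
          Fintype.card_congr (Equiv.subtypeEquivRight fun t => and_iff_right hb),
          card_A2 n y z]
    · rw [heq]
      have hiff : ∀ t : Fin n → Fin 4,
          ((¬ bad x y (c 0) ∧ A2 y (c 0) t) ∧ (c 0 < c 0 ∨ (c 0 = c 0 ∧ LexLt t (Fin.tail c))))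
            ↔ (A2 y (c 0) t ∧ LexLt t (Fin.tail c)) := by
        intro t
        constructor
        · rintro ⟨⟨_, h2⟩, (h | ⟨_, h⟩)⟩
          · exact absurd h (lt_irrefl _)
          · exact ⟨h2, h⟩
        · rintro ⟨h1, h2⟩
          exact ⟨⟨hc'.1, h1⟩, Or.inr ⟨rfl, h2⟩⟩
      rw [Fintype.card_congr (Equiv.subtypeEquivRight hiff), ih y (c 0) (Fin.tail c) hc'.2,
        if_neg (fun h : c 0 < c 0 ∧ _ => lt_irrefl _ h.1), if_pos rfl, zero_add]
    · have h1 : ¬ (z < c 0 ∧ ¬ bad x y z) := fun h => absurd h.1 (asymm hgt)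
      have h2 : ¬ (z = c 0) := fun h => absurd h.symm (ne_of_lt hgt)
      rw [if_neg h1, if_neg h2, add_zero]
      refine Fintype.card_eq_zero_iff.2 ⟨fun t => ?_⟩
      rcases t.2.2 with h | ⟨h, _⟩
      · exact absurd h (asymm hgt)
      · exact h2 h
lemma lexLt_irrefl {m : ℕ} (c : Fin m → Fin 4) : ¬ LexLt c c := by
  rintro ⟨i, _, h⟩; exact lt_irrefl _ h

lemma lexLt_trans {m : ℕ} {a b c : Fin m → Fin 4} (h1 : LexLt a b) (h2 : LexLt b c) :
    LexLt a c := by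
  obtain ⟨i, hi, hlti⟩ := h1
  obtain ⟨j, hj, hltj⟩ := h2
  rcases lt_trichotomy i j with h | h | h
  · exact ⟨i, fun l hl => (hi l hl).trans (hj l (hl.trans h)), lt_of_lt_of_eq hlti (hj i h)⟩
  · subst h
    exact ⟨i, fun l hl => (hi l hl).trans (hj l hl), hlti.trans hltj⟩
  · exact ⟨j, fun l hl => (hi l (hl.trans h)).trans (hj l hl), lt_of_eq_of_lt (hi j h) hltj⟩

lemma lexLt_total {m : ℕ} {a b : Fin m → Fin 4} (hne : a ≠ b) : LexLt a b ∨ LexLt b a := by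
  have hex : ∃ i, a i ≠ b i := by
    by_contra h
    push_neg at h
    exact hne (funext h)
  set s : Finset (Fin m) := Finset.univ.filter (fun i => a i ≠ b i) with hs
  have hsne : s.Nonempty := ⟨hex.choose, by simp [hs, hex.choose_spec]⟩
  set i := s.min' hsne with hi
  have hmem : a i ≠ b i := by
    exact (Finset.mem_filter.1 (s.min'_mem hsne)).2
  have hpre : ∀ j, j < i → a j = b j := by
    intro j hj
    by_contra h
    exact absurd (s.min'_le j (by simp [hs, h])) (not_le.2 hj)
  rcases lt_or_gt_of_ne hmem with h | h
  · exact Or.inl ⟨i, hpre, h⟩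
  · exact Or.inr ⟨i, fun j hj => (hpre j hj).symm, h⟩

lemma rank_lt_N {m : ℕ} (c : Fin m → Fin 4) (hc : TDAvoids c) : rank c < N m := by
  apply Fintype.card_lt_of_injective_of_notMem
    (f := fun d : {d : Fin m → Fin 4 // TDAvoids d ∧ LexLt d c} => (⟨d.1, d.2.1⟩ : {d // TDAvoids d}))
  · intro d d' h
    have h2 := congrArg Subtype.val h
    exact Subtype.ext h2
  · show (⟨c, hc⟩ : {d // TDAvoids d}) ∉ Set.range _
    rintro ⟨⟨d, hd1, hd2⟩, hdc⟩
    have : d = c := congrArg Subtype.val hdc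
    subst this
    exact lexLt_irrefl d hd2

lemma rank_strictMono {m : ℕ} {c c' : Fin m → Fin 4} (hc : TDAvoids c)
    (h : LexLt c c') : rank c < rank c' := by
  apply Fintype.card_lt_of_injective_of_notMem
    (f := fun d : {d : Fin m → Fin 4 // TDAvoids d ∧ LexLt d c} =>
      (⟨d.1, d.2.1, lexLt_trans d.2.2 h⟩ : {d // TDAvoids d ∧ LexLt d c'}))
  · intro d d' hh
    have h2 := congrArg Subtype.val hh
    exact Subtype.ext h2
  · show (⟨c, hc, h⟩ : {d // TDAvoids d ∧ LexLt d c'}) ∉ Set.range _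
    rintro ⟨⟨d, hd1, hd2⟩, hdc⟩
    have : d = c := congrArg Subtype.val hdc
    subst this
    exact lexLt_irrefl d hd2

lemma step_sum (n : ℕ) (x y w : Fin 4) :
    ((∑ z : Fin 4, if z < w ∧ ¬ bad x y z then cnt n y z else 0 : ℕ) : ℚ)
      = ((w : ℕ) : ℚ) * M (n+1) +
        (if ((y : ℕ) = 3 ∧ (w : ℕ) ≠ 0) then
          ∑ j ∈ Finset.range ((n+1)/2), (-1 : ℚ)^(j+1) * M (n - 2*j) else 0) := by
  have hS : (∑ j ∈ Finset.range ((n+1)/2), (-1 : ℚ)^(j+1) * M (n - 2*j)) = -(SQ n) := by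
    rw [SQ, ← Finset.sum_neg_distrib]
    exact Finset.sum_congr rfl fun j _ => by rw [pow_succ]; ring
  have hM := M_eq' n
  have hTC := (TCn n).1
  have hcond : ∀ z : Fin 4, (z < w ∧ ¬ bad x y z) ↔ z < w := by
    intro z
    refine ⟨And.left, fun hz => ⟨hz, fun hb => ?_⟩⟩
    rw [hb.2.2] at hz
    have h1 : (3 : Fin 4) < w := hz
    have h2 := w.isLt
    rw [Fin.lt_def] at h1
    omega
  simp only [hcond]
  rw [hS]
  by_cases hy : y = 3
  · subst hy
    have h31 : cnt n 3 1 = Tn n := cnt_congr n 3 1 1 1 (by simp) (by simp)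
    have h32 : cnt n 3 2 = Tn n := cnt_congr n 3 2 1 1 (by simp) (by simp)
    have h30 : cnt n 3 0 = Cn n := rfl
    fin_cases w
    · rw [Fin.sum_univ_four, if_neg (by decide), if_neg (by decide), if_neg (by decide),
        if_neg (by decide), if_neg (by decide)]
      norm_num
    · rw [Fin.sum_univ_four, if_pos (by decide), if_neg (by decide), if_neg (by decide),
        if_neg (by decide), if_pos (by decide), h30]
      push_cast
      linarith
    · rw [Fin.sum_univ_four, if_pos (by decide), if_pos (by decide), if_neg (by decide),
        if_neg (by decide), if_pos (by decide), h30, h31]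
      push_cast
      linarith
    · rw [Fin.sum_univ_four, if_pos (by decide), if_pos (by decide), if_pos (by decide),
        if_neg (by decide), if_pos (by decide), h30, h31, h32]
      push_cast
      linarith
  · have hy' : ¬ ((y : ℕ) = 3) := fun h => hy (Fin.ext h)
    have hz : ∀ z : Fin 4, z ≠ 3 → cnt n y z = Tn n := fun z hz =>
      cnt_congr n y z 1 1 (iff_of_false (fun h => hy h.1) (by decide))
        (iff_of_false hz (by decide))
    rw [if_neg (fun h => hy' h.1), add_zero]
    fin_cases w
    · rw [Fin.sum_univ_four, if_neg (by decide), if_neg (by decide), if_neg (by decide),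
        if_neg (by decide)]
      norm_num
    · rw [Fin.sum_univ_four, if_pos (by decide), if_neg (by decide), if_neg (by decide),
        if_neg (by decide), hz 0 (by decide)]
      push_cast
      linarith
    · rw [Fin.sum_univ_four, if_pos (by decide), if_pos (by decide), if_neg (by decide),
        if_neg (by decide), hz 0 (by decide), hz 1 (by decide)]
      push_cast
      linarith
    · rw [Fin.sum_univ_four, if_pos (by decide), if_pos (by decide), if_pos (by decide),
        if_neg (by decide), hz 0 (by decide), hz 1 (by decide), hz 2 (by decide)]
      push_cast
      linarith

def bfun (ℓ : ℕ) (y : Fin 4) (c : Fin ℓ → Fin 4) (j : ℕ) : ℕ :=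
  if h : j < ℓ then ((c ⟨ℓ - 1 - j, by omega⟩ : Fin 4) : ℕ) else (y : ℕ)

lemma rkAux_eq : ∀ (ℓ : ℕ) (y x : Fin 4) (c : Fin ℓ → Fin 4),
    (rkAux ℓ x y c : ℚ) = ∑ i ∈ Finset.range ℓ,
      ((bfun ℓ y c i : ℚ) * M (i+1) +
        (if bfun ℓ y c (i+1) = 3 ∧ bfun ℓ y c i ≠ 0 then
          ∑ j ∈ Finset.range ((i+1)/2), (-1 : ℚ)^(j+1) * M (i - 2*j) else 0)) := by
  intro ℓ
  induction ℓ with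
  | zero => intro y x c; simp [rkAux]
  | succ n ih =>
    intro y x c
    have hb : ∀ j, j ≤ n → bfun n (c 0) (Fin.tail c) j = bfun (n+1) y c j := by
      intro j hj
      unfold bfun
      by_cases h : j < n
      · rw [dif_pos h, dif_pos (by omega)]
        have : Fin.tail c ⟨n - 1 - j, by omega⟩ = c ⟨n + 1 - 1 - j, by omega⟩ := by
          show c _ = c _
          exact congrArg c (Fin.ext (by simp [Fin.val_succ]; omega))
        rw [this]
      · have hj' : j = n := by omega
        subst hj'
        rw [dif_neg (by omega), dif_pos (by omega)]
        exact congrArg _ (congrArg c (Fin.ext (by simp)))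
    have hbn : bfun (n+1) y c n = ((c 0 : Fin 4) : ℕ) := by
      unfold bfun
      rw [dif_pos (by omega)]
      exact congrArg _ (congrArg c (Fin.ext (by simp)))
    have hbn1 : bfun (n+1) y c (n+1) = (y : ℕ) := by
      unfold bfun
      rw [dif_neg (by omega)]
    rw [rkAux, Nat.cast_add, step_sum n x y (c 0), ih (c 0) y (Fin.tail c),
      Finset.sum_range_succ, add_comm (∑ i ∈ Finset.range n, _)]
    congr 1
    · rw [hbn, hbn1]
    · refine Finset.sum_congr rfl fun i hi => ?_
      have hi' : i < n := Finset.mem_range.1 hi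
      rw [hb i (by omega), hb (i+1) (by omega)]

lemma rank_formula {m : ℕ} (c : Fin m → Fin 4) (hc : TDAvoids c) :
    (rank c : ℚ) = gIdx m c := by
  have hA : A2 1 1 c := (tdavoids_iff c).1 hc
  have hrank : rank c = rkAux m 1 1 c := by
    rw [show rank c = Fintype.card {d : Fin m → Fin 4 // TDAvoids d ∧ LexLt d c} from rfl,
      Fintype.card_congr (Equiv.subtypeEquivRight
        (fun d : Fin m → Fin 4 => and_congr_left' (tdavoids_iff d)))]
    exact rank_eq_rkAux m 1 1 c hA
  rw [hrank, rkAux_eq m 1 1 c]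
  simp only [gIdx]
  refine Finset.sum_congr rfl fun i hi => ?_
  have hi' : i < m := Finset.mem_range.1 hi
  have hbi : bfun m 1 c i
      = (if h : i < m then ((c ⟨m - 1 - i, by omega⟩ : Fin 4) : ℕ) else 0) := by
    unfold bfun
    rw [dif_pos hi', dif_pos hi']
  by_cases h2 : i + 1 < m
  · have hbi1 : bfun m 1 c (i+1)
        = (if h : i + 1 < m then ((c ⟨m - 1 - (i+1), by omega⟩ : Fin 4) : ℕ) else 0) := by
      unfold bfun
      rw [dif_pos h2, dif_pos h2]
    rw [hbi, hbi1]
  · have hL : bfun m 1 c (i+1) = ((1 : Fin 4) : ℕ) := by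
      unfold bfun
      rw [dif_neg h2]
    have hR : (if h : i + 1 < m then ((c ⟨m - 1 - (i+1), by omega⟩ : Fin 4) : ℕ) else 0) = 0 :=
      dif_neg h2
    rw [hbi, hL, if_neg (fun h => absurd h.1 (by decide)),
      if_neg (show ¬ _ from fun h => by
        have h1 := h.1
        rw [hR] at h1
        exact absurd h1 (by omega))]

theorem stmt_10 (m : ℕ) :
    Set.BijOn (fun c : {c : Fin m → Fin 4 // TDAvoids c} => rank c.1)
      Set.univ (Set.Iio (N m)) ∧
    ∀ c : Fin m → Fin 4, TDAvoids c → (rank c : ℚ) = gIdx m c := by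
  constructor
  · refine ⟨?_, ?_, ?_⟩
    · intro c _
      exact Set.mem_Iio.2 (rank_lt_N c.1 c.2)
    · intro c _ c' _ h
      by_contra hne
      have hne' : c.1 ≠ c'.1 := fun hh => hne (Subtype.ext hh)
      rcases lexLt_total hne' with hlt | hlt
      · exact absurd h (ne_of_lt (rank_strictMono c.2 hlt))
      · exact absurd h.symm (ne_of_lt (rank_strictMono c'.2 hlt))
    · intro k hk
      have hF : Function.Bijective (fun c : {c : Fin m → Fin 4 // TDAvoids c} =>
          (⟨rank c.1, rank_lt_N c.1 c.2⟩ : Fin (N m))) := by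
        rw [Fintype.bijective_iff_injective_and_card]
        refine ⟨?_, by rw [Fintype.card_fin]; rfl⟩
        intro c c' h
        have h' : rank c.1 = rank c'.1 := congrArg Fin.val h
        by_contra hne
        have hne' : c.1 ≠ c'.1 := fun hh => hne (Subtype.ext hh)
        rcases lexLt_total hne' with hlt | hlt
        · exact absurd h' (ne_of_lt (rank_strictMono c.2 hlt))
        · exact absurd h'.symm (ne_of_lt (rank_strictMono c'.2 hlt))
      obtain ⟨c, hcval⟩ := hF.2 ⟨k, Set.mem_Iio.1 hk⟩
      exact ⟨c, Set.mem_univ c, congrArg Fin.val hcval⟩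
  · intro c hc
    exact rank_formula c hc
end

section
/- For m ≥ 2, concatenating two sequences over {0,1,2,3} that each avoid the consecutive pattern (3,0,3), with a single bridging symbol in between chosen as 3 if the last symbol of the first sequence and the first symbol of the second are both 3, and 0 otherwise, yields a sequence that also avoids (3,0,3). -/
lemma infix3_iff {α : Type*} (a b c : α) (l : List α) :
    [a, b, c] <:+: l ↔ ∃ i, l[i]? = some a ∧ l[i+1]? = some b ∧ l[i+2]? = some c := by
  constructor
  · rintro ⟨s, t, rfl⟩
    refine ⟨s.length, ?_, ?_, ?_⟩ <;>
    · rw [List.append_assoc, List.getElem?_append_right (by omega)]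
      simp
  · rintro ⟨i, ha, hb, hc⟩
    have h2 : i + 2 < l.length := (List.getElem?_eq_some_iff.mp hc).1
    have h1 : i + 1 < l.length := by omega
    have h0 : i < l.length := by omega
    refine ⟨l.take i, l.drop (i + 3), ?_⟩
    have hd : l.drop i = a :: b :: c :: l.drop (i + 3) := by
      rw [List.drop_eq_getElem_cons h0, List.drop_eq_getElem_cons h1,
        List.drop_eq_getElem_cons h2]
      simp_all [List.getElem?_eq_getElem]
    rw [List.append_assoc, show [a,b,c] ++ l.drop (i+3) = a :: b :: c :: l.drop (i+3) from rfl,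
      ← hd, List.take_append_drop]

theorem stmt_12 (m : ℕ) (hm : 2 ≤ m) (u v : List (Fin 4))
    (hu : u.length = m) (hv : v.length = m)
    (hau : ¬ [3, 0, 3] <:+: u) (hav : ¬ [3, 0, 3] <:+: v) :
    ¬ [3, 0, 3] <:+:
      (u ++ [if u.getLast? = some 3 ∧ v.head? = some 3 then (3 : Fin 4) else 0] ++ v) := by
  set bb : Fin 4 := if u.getLast? = some 3 ∧ v.head? = some 3 then (3 : Fin 4) else 0 with hbb
  rw [infix3_iff]
  rintro ⟨i, h0, h1, h2⟩
  rw [infix3_iff] at hau hav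
  push_neg at hau hav
  have hlen : (u ++ [bb] ++ v).length = m + 1 + m := by simp [hu, hv]; omega
  have h2l : i + 2 < m + 1 + m := by
    have := (List.getElem?_eq_some_iff.mp h2).1; omega
  -- helper to compute entries
  have hget : ∀ j, j < m + 1 + m →
      (u ++ [bb] ++ v)[j]? = (if j < m then u[j]? else if j = m then some bb else v[j - (m+1)]?) := by
    intro j hj
    rcases lt_trichotomy j m with h | h | h
    · rw [if_pos h]
      simp [List.getElem?_append, hu, h, Nat.lt_succ_of_lt]
    · subst h
      rw [if_neg (by omega), if_pos rfl]
      rw [show u ++ [bb] ++ v = u ++ ([bb] ++ v) from List.append_assoc .. ,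
        List.getElem?_append_right (by omega), hu]
      simp
    · rw [if_neg (by omega), if_neg (by omega),
        List.getElem?_append_right (by simp [hu]; omega)]
      simp [hu]
  rw [hget i (by omega)] at h0
  rw [hget (i+1) (by omega)] at h1
  rw [hget (i+2) (by omega)] at h2
  -- case split
  rcases lt_trichotomy (i + 2) m with hc | hc | hc
  · -- all in u
    rw [if_pos (by omega)] at h0 h1 h2
    exact absurd h2 ((hau i h0 h1).elim)
  · -- i+2 = m : bridge is last symbol
    rw [if_pos (by omega)] at h0 h1
    rw [if_neg (by omega), if_pos hc] at h2
    have hlast : u.getLast? = some 0 := by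
      rw [List.getLast?_eq_getElem? , hu]
      have : m - 1 = i + 1 := by omega
      rw [this]; exact h1
    have : bb = 0 := by
      rw [hbb, if_neg]; rintro ⟨hL, _⟩; rw [hlast] at hL
      exact absurd (Option.some.inj hL) (by decide)
    rw [this] at h2
    exact absurd (Option.some.inj h2) (by decide)
  · rcases lt_trichotomy i m with hd | hd | hd
    ·
      rcases Nat.lt_or_ge (i+1) m with he | he
      · omega
      have he' : i + 1 = m := by omega
      -- bridge in middle
      rw [if_pos hd] at h0
      rw [if_neg (by omega), if_pos he'] at h1
      rw [if_neg (by omega), if_neg (by omega)] at h2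
      have hi2 : i + 2 - (m + 1) = 0 := by omega
      rw [hi2] at h2
      have hlast : u.getLast? = some 3 := by
        rw [List.getLast?_eq_getElem?, hu]
        have : m - 1 = i := by omega
        rw [this]; exact h0
      have hhead : v.head? = some 3 := by
        rw [List.head?_eq_getElem?]; exact h2
      have : bb = 3 := by rw [hbb, if_pos ⟨hlast, hhead⟩]
      rw [this] at h1
      exact absurd (Option.some.inj h1) (by decide)
    · -- i = m : bridge first
      rw [if_neg (by omega), if_pos hd] at h0
      rw [if_neg (by omega), if_neg (by omega)] at h1 h2
      have : bb = 3 := Option.some.inj h0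
      rw [hbb] at this
      by_cases hc3 : u.getLast? = some 3 ∧ v.head? = some 3
      · have hhead := hc3.2
        rw [List.head?_eq_getElem?] at hhead
        have : i + 1 - (m + 1) = 0 := by omega
        rw [this] at h1
        rw [hhead] at h1
        exact absurd (Option.some.inj h1) (by decide)
      · rw [if_neg hc3] at this
        exact absurd this (by decide)
    · -- all in v
      rw [if_neg (by omega), if_neg (by omega)] at h0 h1 h2
      have e0 : i - (m+1) + 1 = i + 1 - (m+1) := by omega
      have e1 : i - (m+1) + 2 = i + 2 - (m+1) := by omega
      exact absurd h2 (by rw [← e1]; exact (hav (i - (m+1)) h0 (by rw [e0]; exact h1)).elim)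
end

section
/- The matrix T = [[6,1,1,0,0],[5,1,1,1,0],[5,1,1,0,1],[6,0,1,0,0],[6,1,0,0,0]] has a real eigenvalue λ with 7.96 < λ < 7.97, and λ is the largest real root of its characteristic polynomial. -/
/-!
The characteristic polynomial of `T` is `p = X⁵ - 8X⁴ + 2X³ - 14X² + X - 6`. It changes sign on
`[7.96, 7.97]`, which gives the root `λ`, and `p' = 5X⁴ - 32X³ + 6X² - 28X + 1` is positive on
`(7.96, ∞)`, so `p` is strictly increasing on `[7.96, ∞)` and has no root beyond `λ`.
-/

/-- State-transition matrix of the FSTD for GF(8) sequences avoiding (0,β,0) and (β⁶,β⁴,β⁶). -/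
noncomputable def T : Matrix (Fin 5) (Fin 5) ℝ :=
  !![6, 1, 1, 0, 0;
     5, 1, 1, 1, 0;
     5, 1, 1, 0, 1;
     6, 0, 1, 0, 0;
     6, 1, 0, 0, 0]

open Set Polynomial

theorem charpoly_T : T.charpoly = X ^ 5 - 8 * X ^ 4 + 2 * X ^ 3 - 14 * X ^ 2 + X - 6 := by
  refine Polynomial.funext fun x => ?_
  have hmat : Matrix.scalar _ x - T =
      !![x - 6, -1, -1, 0, 0;
         -5, x - 1, -1, -1, 0;
         -5, -1, x - 1, 0, -1;
         -6, 0, -1, x, 0;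
         -6, -1, 0, 0, x] := by
    ext i j
    fin_cases i <;> fin_cases j <;> simp [T]
  rw [Matrix.eval_charpoly, hmat]
  simp [Matrix.det_succ_row_zero, Fin.sum_univ_succ, Fin.succAbove]
  ring

theorem le_of_strictMonoOn_Ici_of_apply_eq {f : ℝ → ℝ} {a r x : ℝ}
    (hf : StrictMonoOn f (Ici a)) (har : a ≤ r) (hx : f x = f r) : x ≤ r := by
  by_contra! hrx
  exact (hf har (har.trans hrx.le) hrx).ne' hx

theorem strictMonoOn_eval_charpoly_T : StrictMonoOn (fun x => T.charpoly.eval x) (Ici 7.96) := by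
  refine strictMonoOn_of_deriv_pos (convex_Ici _) (Polynomial.continuousOn _) fun x hx => ?_
  rw [interior_Ici, mem_Ioi] at hx
  have hderiv : deriv (fun x => T.charpoly.eval x) x =
      5 * x ^ 4 - 32 * x ^ 3 + 6 * x ^ 2 - 28 * x + 1 := by
    rw [Polynomial.deriv, charpoly_T]
    simp
    ring
  rw [hderiv]
  nlinarith [pow_pos (by linarith : (0 : ℝ) < x) 3]

theorem exists_isRoot_charpoly_T_mem_Ioo : ∃ r ∈ Ioo (7.96 : ℝ) 7.97, T.charpoly.IsRoot r := by
  have hsign : (0 : ℝ) ∈ Ioo (T.charpoly.eval 7.96) (T.charpoly.eval 7.97) := by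
    simp only [charpoly_T]
    constructor <;> norm_num
  exact intermediate_value_Ioo (by norm_num) (Polynomial.continuousOn _) hsign

theorem stmt_16 :
    ∃ l : ℝ, (Matrix.charpoly T).IsRoot l ∧ 7.96 < l ∧ l < 7.97 ∧
      ∀ x : ℝ, (Matrix.charpoly T).IsRoot x → x ≤ l := by
  obtain ⟨r, ⟨hr_gt, hr_lt⟩, hr⟩ := exists_isRoot_charpoly_T_mem_Ioo
  refine ⟨r, hr, hr_gt, hr_lt, fun x hx => ?_⟩
  exact le_of_strictMonoOn_Ici_of_apply_eq strictMonoOn_eval_charpoly_T hr_gt.le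
    (hx.eq_zero.trans hr.eq_zero.symm)
end

section
/- For every m ≥ 1, the number of length-m sequences over an 8-letter alphabet avoiding the two consecutive triples (s₀,s₁,s₀) and (t₀,t₁,t₀) (with s₀,s₁,t₀,t₁ distinct symbols) is at least 7^m. -/
def seqc (pivot : Fin 8 → Fin 8 → Fin 8) (d : ℕ → Fin 7) : ℕ → Fin 8
  | 0 => (pivot 0 0).succAbove (d 0)
  | 1 => (pivot 0 (seqc pivot d 0)).succAbove (d 1)
  | n+2 => (pivot (seqc pivot d n) (seqc pivot d (n+1))).succAbove (d (n+2))

lemma seqc_inj (pivot : Fin 8 → Fin 8 → Fin 8) (d d' : ℕ → Fin 7) (i : ℕ)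
    (h : ∀ j ≤ i, seqc pivot d j = seqc pivot d' j) : d i = d' i := by
  match i with
  | 0 =>
    have := h 0 le_rfl
    simp only [seqc] at this
    exact Fin.succAbove_right_injective this
  | 1 =>
    have h0 : seqc pivot d 0 = seqc pivot d' 0 := h 0 (by omega)
    have := h 1 le_rfl
    simp only [seqc] at this h0
    rw [h0] at this
    exact Fin.succAbove_right_injective this
  | n+2 =>
    have h0 : seqc pivot d n = seqc pivot d' n := h n (by omega)
    have h1 : seqc pivot d (n+1) = seqc pivot d' (n+1) := h (n+1) (by omega)
    have := h (n+2) le_rfl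
    simp only [seqc] at this
    rw [h0, h1] at this
    exact Fin.succAbove_right_injective this

theorem stmt_17 (m : ℕ) (hm : 1 ≤ m) (s₀ s₁ t₀ t₁ : Fin 8)
    (h01 : s₀ ≠ s₁) (h02 : s₀ ≠ t₀) (h03 : s₀ ≠ t₁)
    (h12 : s₁ ≠ t₀) (h13 : s₁ ≠ t₁) (h23 : t₀ ≠ t₁) :
    7 ^ m ≤ Fintype.card {c : Fin m → Fin 8 //
      ∀ i j k : Fin m, (j : ℕ) = (i : ℕ) + 1 → (k : ℕ) = (i : ℕ) + 2 →
        ¬(c i = s₀ ∧ c j = s₁ ∧ c k = s₀) ∧ ¬(c i = t₀ ∧ c j = t₁ ∧ c k = t₀)} := by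
  classical
  set pivot : Fin 8 → Fin 8 → Fin 8 := fun a b => if a = t₀ ∧ b = t₁ then t₀ else s₀ with hpiv
  set ext : (Fin m → Fin 7) → ℕ → Fin 7 :=
    fun d n => if h : n < m then d ⟨n, h⟩ else 0 with hext
  have key : ∀ d : Fin m → Fin 7,
      ∀ i j k : Fin m, (j : ℕ) = (i : ℕ) + 1 → (k : ℕ) = (i : ℕ) + 2 →
        ¬(seqc pivot (ext d) i = s₀ ∧ seqc pivot (ext d) j = s₁ ∧ seqc pivot (ext d) k = s₀) ∧
        ¬(seqc pivot (ext d) i = t₀ ∧ seqc pivot (ext d) j = t₁ ∧ seqc pivot (ext d) k = t₀) := by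
    intro d i j k hj hk
    have hk2 : seqc pivot (ext d) (k : ℕ) =
        (pivot (seqc pivot (ext d) i) (seqc pivot (ext d) ((i:ℕ)+1))).succAbove
          (ext d ((i:ℕ)+2)) := by
      rw [hk]; rfl
    constructor
    · rintro ⟨hi, hjv, hkv⟩
      rw [hj] at hjv
      rw [hi, hjv] at hk2
      have hp : pivot s₀ s₁ = s₀ := by
        simp [hpiv, h13]
      rw [hp] at hk2
      exact Fin.succAbove_ne _ _ (hk2 ▸ hkv)
    · rintro ⟨hi, hjv, hkv⟩
      rw [hj] at hjv
      rw [hi, hjv] at hk2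
      have hp : pivot t₀ t₁ = t₀ := by simp [hpiv]
      rw [hp] at hk2
      exact Fin.succAbove_ne _ _ (hk2 ▸ hkv)
  let F : (Fin m → Fin 7) → {c : Fin m → Fin 8 //
      ∀ i j k : Fin m, (j : ℕ) = (i : ℕ) + 1 → (k : ℕ) = (i : ℕ) + 2 →
        ¬(c i = s₀ ∧ c j = s₁ ∧ c k = s₀) ∧ ¬(c i = t₀ ∧ c j = t₁ ∧ c k = t₀)} :=
    fun d => ⟨fun i => seqc pivot (ext d) i, key d⟩
  have hF : Function.Injective F := by
    intro d d' hdd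
    have hval : ∀ i : Fin m, seqc pivot (ext d) i = seqc pivot (ext d') i := by
      intro i
      exact congrFun (congrArg Subtype.val hdd) i
    have hextEq : ∀ n, ext d n = ext d' n := by
      intro n
      by_cases hn : n < m
      · refine seqc_inj pivot (ext d) (ext d') n ?_
        intro j hj
        have hjm : j < m := lt_of_le_of_lt hj hn
        exact hval ⟨j, hjm⟩
      · simp [hext, hn]
    funext i
    have := hextEq (i : ℕ)
    simpa [hext, i.isLt, Fin.eta] using this
  calc 7 ^ m = Fintype.card (Fin m → Fin 7) := by simp
    _ ≤ _ := Fintype.card_le_of_injective F hF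
end
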